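/- arXiv:1310.4565 — 3 statements merged into one kernel-verified Lean document; each statement's English description precedes it below -/
import Mathlib

section
/- As formal power series in q, (∑_{n≥0} p(n)q^n)·(∑_{n≥1} σ(n)q^n) = ∑_{n≥1} n·p(n) q^n; equivalently, for each n ≥ 1, ∑_{k=0}^{n-1} p(k)σ(n−k) = n·p(n). -/
open Finset PowerSeries
open scoped Classical

noncomputable section

/-- Sum of positive divisors of `n` (`0` if `n = 0`). -/
def sigma (n : ℕ) : ℕ := ∑ d ∈ n.divisors, d

/-- Number of partitions of `n`. -/
def p (n : ℕ) : ℕ := Fintype.card (Nat.Partition n)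

/-- Smallest part of a partition (junk value `0` for the empty partition). -/
def sPart {n : ℕ} (π : Nat.Partition n) : ℕ := sInf {a | a ∈ π.parts}

/-- Rank of a partition: largest part minus number of parts. -/
def rank {n : ℕ} (π : Nat.Partition n) : ℤ :=
  (π.parts.sup : ℤ) - (Multiset.card π.parts : ℤ)

/-- Number of partitions of `n` with rank `m`. -/
def N (m : ℤ) (n : ℕ) : ℕ := Nat.card {π : Nat.Partition n // rank π = m}

/-- Second rank moment `N₂(n) = ∑_m m² N(m,n)` (the rank lies in `[-n, n]`). -/
def N2 (n : ℕ) : ℤ := ∑ m ∈ Finset.Icc (-(n : ℤ)) (n : ℤ), m ^ 2 * N m n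

/-- The Andrews–Garvan crank of a partition. -/
def crank {n : ℕ} (π : Nat.Partition n) : ℤ :=
  if π.parts.count 1 = 0 then (π.parts.sup : ℤ)
  else (Multiset.card (π.parts.filter fun a => π.parts.count 1 < a) : ℤ)
    - (π.parts.count 1 : ℤ)

/-- `M(m,n)`: number of partitions of `n` with crank `m`, with the
Andrews–Garvan correction at `n = 1`. -/
def M (m : ℤ) (n : ℕ) : ℤ :=
  if n = 1 then (if m = 0 then -1 else if m = 1 ∨ m = -1 then 1 else 0)
  else (Nat.card {π : Nat.Partition n // crank π = m} : ℤ)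

/-- Second crank moment `M₂(n) = ∑_m m² M(m,n)` (the crank lies in `[-n, n]`). -/
def M2 (n : ℕ) : ℤ := ∑ m ∈ Finset.Icc (-(n : ℤ)) (n : ℤ), m ^ 2 * M m n

/-- `spt(n)`: total number of appearances of the smallest part over all
partitions of `n`. -/
def spt (n : ℕ) : ℕ := ∑ π : Nat.Partition n, π.parts.count (sPart π)

/-- `spt_o⁺(n)`: total number of appearances of the smallest part over all
partitions `π` of `n` in which no odd part greater than `2 s(π)` occurs. -/
def sptoPlus (n : ℕ) : ℕ :=
  ∑ π : Nat.Partition n,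
    if ∀ a ∈ π.parts, Odd a → a ≤ 2 * sPart π then π.parts.count (sPart π) else 0

/-- `spt_o⁻(n)`: total number of appearances of `s(π)` over all partition pairs
`(π, δ_{s(π)})` of total size `n` (i.e. `|π| + s(π)(s(π)-1)/2 = n`), where `π`
has no odd part greater than `2 s(π)`. -/
def sptoMinus (n : ℕ) : ℕ :=
  ∑ m ∈ Finset.range (n + 1), ∑ π : Nat.Partition m,
    if m + sPart π * (sPart π - 1) / 2 = n ∧
        (∀ a ∈ π.parts, Odd a → a ≤ 2 * sPart π)
      then π.parts.count (sPart π) else 0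

/-- `spt_o(n) = spt_o⁺(n) − spt_o⁻(n)`. -/
def spto (n : ℕ) : ℤ := (sptoPlus n : ℤ) - (sptoMinus n : ℤ)

namespace SptAux

lemma count_zero_parts {n : ℕ} (π : Nat.Partition n) : π.parts.count 0 = 0 := by
  rw [Multiset.count_eq_zero]
  intro h
  exact absurd (π.parts_pos h) (lt_irrefl 0)

lemma mul_count_le {n : ℕ} (π : Nat.Partition n) (d : ℕ) :
    d * π.parts.count d ≤ n := by
  have hle : Multiset.replicate (π.parts.count d) d ≤ π.parts :=
    Multiset.le_count_iff_replicate_le.mp le_rfl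
  have h1 : (π.parts - Multiset.replicate (π.parts.count d) d)
      + Multiset.replicate (π.parts.count d) d = π.parts := tsub_add_cancel_of_le hle
  have h2 := congrArg Multiset.sum h1
  rw [Multiset.sum_add, Multiset.sum_replicate, smul_eq_mul, π.parts_sum, Nat.mul_comm] at h2
  omega

lemma count_le {n : ℕ} (π : Nat.Partition n) (d : ℕ) : π.parts.count d ≤ n := by
  rcases Nat.eq_zero_or_pos d with h | h
  · rw [h, count_zero_parts]; exact Nat.zero_le _
  · have := mul_count_le π d
    calc π.parts.count d ≤ d * π.parts.count d := Nat.le_mul_of_pos_left _ h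
    _ ≤ n := this

lemma part_le {n : ℕ} (π : Nat.Partition n) {a : ℕ} (ha : a ∈ π.parts) : a ≤ n := by
  rw [← π.parts_sum]
  exact Multiset.le_sum_of_mem ha

def partEquiv (n d j : ℕ) (hd : 1 ≤ d) (h : d * j ≤ n) :
    {π : Nat.Partition n // j ≤ π.parts.count d} ≃ Nat.Partition (n - d * j) where
  toFun := fun x =>
    { parts := x.1.parts - Multiset.replicate j d
      parts_pos := fun hi => x.1.parts_pos (Multiset.mem_of_le tsub_le_self hi)
      parts_sum := by
        have hle : Multiset.replicate j d ≤ x.1.parts :=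
          Multiset.le_count_iff_replicate_le.mp x.2
        have h1 := congrArg Multiset.sum (tsub_add_cancel_of_le hle)
        rw [Multiset.sum_add, Multiset.sum_replicate, smul_eq_mul, x.1.parts_sum,
          Nat.mul_comm j d] at h1
        omega }
  invFun := fun π =>
    ⟨{ parts := π.parts + Multiset.replicate j d
       parts_pos := by
         intro i hi
         rcases Multiset.mem_add.mp hi with h' | h'
         · exact π.parts_pos h'
         · rw [Multiset.eq_of_mem_replicate h']; exact hd
       parts_sum := by
         rw [Multiset.sum_add, Multiset.sum_replicate, smul_eq_mul, π.parts_sum,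
           Nat.mul_comm j d]
         omega },
     by simp [Multiset.count_add, Multiset.count_replicate]⟩
  left_inv := fun x => by
    have hle : Multiset.replicate j d ≤ x.1.parts :=
      Multiset.le_count_iff_replicate_le.mp x.2
    exact Subtype.ext (Nat.Partition.ext (tsub_add_cancel_of_le hle))
  right_inv := fun π => Nat.Partition.ext (add_tsub_cancel_right _ _)

lemma card_subtype (n d j : ℕ) (hd : 1 ≤ d) (h : d * j ≤ n) :
    Fintype.card {π : Nat.Partition n // j ≤ π.parts.count d} = p (n - d * j) :=
  Fintype.card_congr (partEquiv n d j hd h)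

lemma inner_count_sum (n : ℕ) (π : Nat.Partition n) :
    ∑ x ∈ (range (n + 1)) ×ˢ (range (n + 1)),
      (if 1 ≤ x.2 ∧ x.2 ≤ π.parts.count x.1 then x.1 else 0) = n := by
  rw [Finset.sum_product]
  have step : ∀ d ∈ range (n + 1),
      ∑ j ∈ range (n + 1), (if 1 ≤ j ∧ j ≤ π.parts.count d then d else 0)
        = π.parts.count d * d := by
    intro d _
    rw [← Finset.sum_filter]
    have hfil : (range (n + 1)).filter (fun j => 1 ≤ j ∧ j ≤ π.parts.count d)
        = Finset.Icc 1 (π.parts.count d) := by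
      have hc := count_le π d
      ext j
      simp only [Finset.mem_filter, Finset.mem_range, Finset.mem_Icc]
      omega
    rw [hfil, Finset.sum_const, Nat.card_Icc, smul_eq_mul]
    simp
  rw [Finset.sum_congr rfl step]
  have hsub : π.parts.toFinset ⊆ range (n + 1) := by
    intro a ha
    have := part_le π (Multiset.mem_toFinset.mp ha)
    exact mem_range.mpr (by omega)
  rw [← Finset.sum_subset hsub (by
    intro x _ hx
    have h0 : π.parts.count x = 0 :=
      Multiset.count_eq_zero_of_notMem (fun h => hx (Multiset.mem_toFinset.mpr h))
    simp [h0])]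
  have hmap := Finset.sum_multiset_map_count π.parts (id : ℕ → ℕ)
  rw [Multiset.map_id] at hmap
  calc ∑ x ∈ π.parts.toFinset, π.parts.count x * x = π.parts.sum := by
        rw [hmap]; simp [smul_eq_mul]
    _ = n := π.parts_sum

lemma rhs_eq (n : ℕ) :
    ∑ x ∈ (range (n + 1)) ×ˢ (range (n + 1)),
        (if 1 ≤ x.2 ∧ 1 ≤ x.1 ∧ x.1 * x.2 ≤ n then x.1 * p (n - x.1 * x.2) else 0)
      = n * p n := by
  have termeq : ∀ x ∈ (range (n + 1)) ×ˢ (range (n + 1)),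
      (if 1 ≤ x.2 ∧ 1 ≤ x.1 ∧ x.1 * x.2 ≤ n then x.1 * p (n - x.1 * x.2) else 0)
        = ∑ π : Nat.Partition n,
            (if 1 ≤ x.2 ∧ x.2 ≤ π.parts.count x.1 then x.1 else 0) := by
    rintro ⟨d, j⟩ _
    dsimp only
    by_cases hc : 1 ≤ j ∧ 1 ≤ d ∧ d * j ≤ n
    · obtain ⟨hj, hd, hdj⟩ := hc
      rw [if_pos ⟨hj, hd, hdj⟩]
      have heq : ∀ π : Nat.Partition n,
          (if 1 ≤ j ∧ j ≤ π.parts.count d then d else 0)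
            = (if j ≤ π.parts.count d then d else 0) := by
        intro π; simp [hj]
      rw [Finset.sum_congr rfl (fun π _ => heq π), ← Finset.sum_filter,
        Finset.sum_const, smul_eq_mul, ← Fintype.card_subtype,
        card_subtype n d j hd hdj, Nat.mul_comm]
    · rw [if_neg hc]
      symm
      apply Finset.sum_eq_zero
      intro π _
      rw [if_neg]
      rintro ⟨h1, h2⟩
      apply hc
      have hd : 1 ≤ d := by
        by_contra hd0
        have hd0' : d = 0 := by omega
        rw [hd0', count_zero_parts] at h2
        omega
      have hm := mul_count_le π d
      have hmm : d * j ≤ d * π.parts.count d := Nat.mul_le_mul_left _ h2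
      exact ⟨h1, hd, by omega⟩
  rw [Finset.sum_congr rfl termeq, Finset.sum_comm]
  rw [Finset.sum_congr rfl (fun π _ => inner_count_sum n π)]
  simp [p, mul_comm]

lemma lhs_eq (n : ℕ) (hn : 1 ≤ n) :
    ∑ x ∈ (range (n + 1)) ×ˢ (range (n + 1)),
        (if 1 ≤ x.2 ∧ 1 ≤ x.1 ∧ x.1 * x.2 ≤ n then x.1 * p (n - x.1 * x.2) else 0)
      = ∑ k ∈ range n, p k * sigma (n - k) := by
  rw [← Finset.sum_filter]
  set s := ((range (n + 1)) ×ˢ (range (n + 1))).filter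
      (fun x => 1 ≤ x.2 ∧ 1 ≤ x.1 ∧ x.1 * x.2 ≤ n) with hs
  have hmap : ∀ x ∈ s, n - x.1 * x.2 ∈ range n := by
    intro x hx
    rw [hs, Finset.mem_filter] at hx
    obtain ⟨-, hj, hd, hle⟩ := hx
    have : 1 ≤ x.1 * x.2 := Nat.one_le_iff_ne_zero.mpr (by positivity)
    exact mem_range.mpr (by omega)
  rw [← Finset.sum_fiberwise_of_maps_to hmap (fun x => x.1 * p (n - x.1 * x.2))]
  apply Finset.sum_congr rfl
  intro k hk
  have hkn : k < n := mem_range.mp hk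
  have hfib : s.filter (fun x => n - x.1 * x.2 = k) = Nat.divisorsAntidiagonal (n - k) := by
    ext ⟨d, j⟩
    rw [Finset.mem_filter, hs, Finset.mem_filter, Finset.mem_product,
      Nat.mem_divisorsAntidiagonal]
    simp only [mem_range]
    constructor
    · rintro ⟨⟨⟨hd', hj'⟩, hj1, hd1, hle⟩, hkk⟩
      exact ⟨by omega, by omega⟩
    · rintro ⟨hm, hnz⟩
      have hd : 1 ≤ d := by
        rcases Nat.eq_zero_or_pos d with h | h
        · rw [h, Nat.zero_mul] at hm; omega
        · exact h
      have hj : 1 ≤ j := by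
        rcases Nat.eq_zero_or_pos j with h | h
        · rw [h, Nat.mul_zero] at hm; omega
        · exact h
      have h1 : d ≤ d * j := Nat.le_mul_of_pos_right d hj
      have h2 : j ≤ d * j := Nat.le_mul_of_pos_left j hd
      refine ⟨⟨⟨by omega, by omega⟩, hj, hd, by omega⟩, by omega⟩
  rw [hfib]
  have hstep : ∀ x ∈ Nat.divisorsAntidiagonal (n - k),
      x.1 * p (n - x.1 * x.2) = x.1 * p k := by
    intro x hx
    obtain ⟨h1, -⟩ := Nat.mem_divisorsAntidiagonal.mp hx
    have h2 : n - (n - k) = k := by omega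
    rw [h1, h2]
  rw [Finset.sum_congr rfl hstep]
  rw [Nat.sum_divisorsAntidiagonal (fun i _ => i * p k)]
  rw [← Finset.sum_mul]
  rw [sigma, Nat.mul_comm]

end SptAux

/-- `∑_{k=0}^{n-1} p(k) σ(n−k) = n p(n)` for `n ≥ 1`. -/
theorem sum_p_mul_sigma (n : ℕ) (hn : 1 ≤ n) :
    ∑ k ∈ Finset.range n, p k * sigma (n - k) = n * p n := by
  rw [← SptAux.lhs_eq n hn, SptAux.rhs_eq n]
end
end

section
/- The pair (α_n, β_n) with α_0 = 1, α_{2n} = (−1)^n q^{n(3n−1)}(1+q^{2n}) for n ≥ 1, α_{2n+1} = 0, and β_n = 1/((q;q)_n (q;q²)_n) is a Bailey pair relative to a = 1; that is, β_n = ∑_{r=0}^{n} α_r / ((q;q)_{n+r} (q;q)_{n−r}) for all n ≥ 0. -/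
/-!
Multiplying by `(q;q)_{2n} = (q;q)_n (q;q²)_n (-q;q)_n`, the claim becomes
`∑_{j=-n}^{n} (-1)^j q^{j(3j-1)} [2n, n-2j]_q = (-q;q)_n`: for `j ≥ 1` the terms `j` and `-j`
combine to `α_{2j} [2n, n-2j]_q` by the symmetry of the Gaussian binomial. Call the left side
`U_n`, and let `V_n` be the same sum with `[2n+1, n+1-2j]_q`. Expanding by the `q`-Pascal rule,
`V_n = U_n` because the extra terms cancel in pairs under `j ↦ 1 - j`, and
`U_{n+1} = (1 + q^{n+1}) V_n` because under `j ↦ -j` the extra terms become `q^{n+1} V_n`.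
Hence `U_n = (-q;q)_n` by induction.
-/

open Finset PowerSeries
open scoped Classical

noncomputable section

/-- `(q; q)_k = ∏_{j=1}^{k} (1 - q^j)`. -/
def pq (k : ℕ) : PowerSeries ℚ :=
  ∏ j ∈ Finset.range k, (1 - (PowerSeries.X : PowerSeries ℚ) ^ (j + 1))

/-- `(q; q²)_k = ∏_{j=0}^{k-1} (1 - q^{2j+1})`. -/
def pq2 (k : ℕ) : PowerSeries ℚ :=
  ∏ j ∈ Finset.range k, (1 - (PowerSeries.X : PowerSeries ℚ) ^ (2 * j + 1))

/-- `(α, β)` is a Bailey pair relative to `a = 1`: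
`β_n = ∑_{r=0}^{n} α_r / ((q;q)_{n+r} (q;q)_{n-r})`. -/
def IsBaileyPair (α β : ℕ → PowerSeries ℚ) : Prop :=
  ∀ n : ℕ, β n = ∑ r ∈ Finset.range (n + 1), α r * (pq (n + r) * pq (n - r))⁻¹

lemma constantCoeff_one_sub_X_pow {K : Type*} [CommRing K] {m : ℕ} (hm : m ≠ 0) :
    constantCoeff (1 - (X : K⟦X⟧) ^ m) = 1 := by
  simp [zero_pow hm]

lemma constantCoeff_pq (k : ℕ) : constantCoeff (pq k) = 1 := by
  rw [pq, map_prod]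
  exact prod_eq_one fun j _ ↦ constantCoeff_one_sub_X_pow j.succ_ne_zero

lemma constantCoeff_pq2 (k : ℕ) : constantCoeff (pq2 k) = 1 := by
  rw [pq2, map_prod]
  exact prod_eq_one fun j _ ↦ constantCoeff_one_sub_X_pow (2 * j).succ_ne_zero

lemma pq_succ (k : ℕ) : pq (k + 1) = pq k * (1 - X ^ (k + 1)) := prod_range_succ _ _

lemma pq2_succ (k : ℕ) : pq2 (k + 1) = pq2 k * (1 - X ^ (2 * k + 1)) := prod_range_succ _ _

lemma inv_pq_mul_pq (k : ℕ) : (pq k)⁻¹ * pq k = 1 :=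
  PowerSeries.inv_mul_cancel _ (by simp [constantCoeff_pq])

lemma inv_pq_eq_mul_inv_pq_succ (k : ℕ) :
    (pq k)⁻¹ = (1 - X ^ (k + 1)) * (pq (k + 1))⁻¹ := by
  rw [PowerSeries.eq_mul_inv_iff_mul_eq (by simp [constantCoeff_pq]), pq_succ, ← mul_assoc,
    inv_pq_mul_pq, one_mul]

lemma pq_two_mul (n : ℕ) :
    pq (2 * n) = pq n * pq2 n * ∏ i ∈ range n, (1 + X ^ (i + 1)) := by
  induction n with
  | zero => simp [pq, pq2]
  | succ n ih =>
    rw [show 2 * (n + 1) = 2 * n + 1 + 1 by ring, pq_succ, pq_succ, ih, pq_succ, pq2_succ,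
      prod_range_succ]
    ring

lemma inv_pq_mul_pq2 (n : ℕ) :
    (pq n * pq2 n)⁻¹ = (pq (2 * n))⁻¹ * ∏ i ∈ range n, (1 + X ^ (i + 1)) := by
  have hunit : constantCoeff (pq n * pq2 n) ≠ 0 := by simp [constantCoeff_pq, constantCoeff_pq2]
  rw [eq_comm, PowerSeries.eq_inv_iff_mul_eq_one hunit, mul_assoc, mul_comm (∏ i ∈ range n, _),
    ← pq_two_mul, inv_pq_mul_pq]

/-- `q ^ m` for `m ≥ 0` (junk value `1` for `m < 0`). -/
def qPow (m : ℤ) : ℚ⟦X⟧ := X ^ m.toNat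

lemma qPow_natCast (m : ℕ) : qPow m = X ^ m := by simp [qPow]

lemma qPow_add {a b : ℤ} (ha : 0 ≤ a) (hb : 0 ≤ b) : qPow (a + b) = qPow a * qPow b := by
  rw [qPow, qPow, qPow, ← pow_add, Int.toNat_add ha hb]

/-- The Gaussian binomial `[a+b, a]_q`, indexed by the two parts so that no truncated
subtraction occurs. -/
def gaussBinom (a b : ℕ) : ℚ⟦X⟧ := pq (a + b) * (pq a)⁻¹ * (pq b)⁻¹

lemma gaussBinom_comm (a b : ℕ) : gaussBinom a b = gaussBinom b a := by
  rw [gaussBinom, gaussBinom, add_comm, mul_right_comm]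

lemma gaussBinom_zero_left (b : ℕ) : gaussBinom 0 b = 1 := by
  simp [gaussBinom, pq, mul_comm]

lemma gaussBinom_succ_succ (a b : ℕ) :
    gaussBinom (a + 1) (b + 1) =
      gaussBinom (a + 1) b + X ^ (b + 1) * gaussBinom a (b + 1) := by
  rw [gaussBinom, gaussBinom, gaussBinom, inv_pq_eq_mul_inv_pq_succ a,
    inv_pq_eq_mul_inv_pq_succ b, show a + 1 + (b + 1) = a + 1 + b + 1 by ring, pq_succ,
    show a + (b + 1) = a + 1 + b by ring]
  ring

lemma inv_pq_mul_gaussBinom (a b : ℕ) :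
    (pq (a + b))⁻¹ * gaussBinom a b = (pq a)⁻¹ * (pq b)⁻¹ := by
  rw [gaussBinom, ← mul_assoc, ← mul_assoc, inv_pq_mul_pq, one_mul]

def gaussBinomZ (a b : ℤ) : ℚ⟦X⟧ :=
  if 0 ≤ a ∧ 0 ≤ b then gaussBinom a.toNat b.toNat else 0

@[simp]
lemma gaussBinomZ_natCast (a b : ℕ) : gaussBinomZ a b = gaussBinom a b := by
  simp [gaussBinomZ]

lemma gaussBinomZ_of_neg_left {a : ℤ} (ha : a < 0) (b : ℤ) : gaussBinomZ a b = 0 :=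
  if_neg fun h ↦ by omega

lemma gaussBinomZ_of_neg_right (a : ℤ) {b : ℤ} (hb : b < 0) : gaussBinomZ a b = 0 :=
  if_neg fun h ↦ by omega

lemma nonneg_of_gaussBinomZ_ne_zero {a b : ℤ} (h : gaussBinomZ a b ≠ 0) :
    0 ≤ a ∧ 0 ≤ b := by
  by_contra! hab
  exact h (if_neg fun h ↦ by omega)

lemma gaussBinomZ_comm (a b : ℤ) : gaussBinomZ a b = gaussBinomZ b a := by
  simp only [gaussBinomZ, gaussBinom_comm a.toNat, and_comm]

lemma gaussBinomZ_zero_left {b : ℤ} (hb : 0 ≤ b) : gaussBinomZ 0 b = 1 := by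
  lift b to ℕ using hb
  exact_mod_cast gaussBinom_zero_left b

lemma gaussBinomZ_zero_right {a : ℤ} (ha : 0 ≤ a) : gaussBinomZ a 0 = 1 := by
  rw [gaussBinomZ_comm, gaussBinomZ_zero_left ha]

lemma gaussBinomZ_succ_succ {a b : ℤ} (hab : -1 ≤ a + b) :
    gaussBinomZ (a + 1) (b + 1) =
      gaussBinomZ (a + 1) b + qPow (b + 1) * gaussBinomZ a (b + 1) := by
  rcases lt_trichotomy a (-1) with ha | rfl | ha
  · simp [gaussBinomZ_of_neg_left (show a < 0 by omega),
      gaussBinomZ_of_neg_left (show a + 1 < 0 by omega)]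
  · rw [neg_add_cancel, gaussBinomZ_zero_left (by omega), gaussBinomZ_zero_left (by omega),
      gaussBinomZ_of_neg_left (by norm_num), mul_zero, add_zero]
  rcases lt_trichotomy b (-1) with hb | rfl | hb
  · simp [gaussBinomZ_of_neg_right _ (show b < 0 by omega),
      gaussBinomZ_of_neg_right _ (show b + 1 < 0 by omega)]
  · rw [neg_add_cancel, gaussBinomZ_zero_right (by omega), gaussBinomZ_zero_right (by omega),
      gaussBinomZ_of_neg_right _ (by norm_num), zero_add, qPow, Int.toNat_zero, pow_zero,
      one_mul]
  lift a to ℕ using (by omega)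
  lift b to ℕ using (by omega)
  exact_mod_cast gaussBinom_succ_succ a b

lemma gaussBinomZ_succ_succ' {a b : ℤ} (hab : -1 ≤ a + b) :
    gaussBinomZ (a + 1) (b + 1) =
      gaussBinomZ a (b + 1) + qPow (a + 1) * gaussBinomZ (a + 1) b := by
  rw [gaussBinomZ_comm, gaussBinomZ_succ_succ (by omega), gaussBinomZ_comm (b + 1),
    gaussBinomZ_comm b]

lemma sum_range_two_mul {M : Type*} [AddCommMonoid M] (f : ℕ → M) (m : ℕ) :
    ∑ r ∈ range (2 * m), f r = ∑ j ∈ range m, (f (2 * j) + f (2 * j + 1)) := by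
  induction m with
  | zero => simp
  | succ m ih =>
    rw [mul_add, mul_one, sum_range_succ, sum_range_succ, sum_range_succ, ih, add_assoc]

lemma sum_Icc_neg_natCast_eq_sum_range {M : Type*} [AddCommMonoid M] (f : ℤ → M) (n : ℕ) :
    ∑ j ∈ Icc (-n : ℤ) n, f j =
      ∑ j ∈ range (n + 1), if j = 0 then f 0 else f j + f (-j) := by
  induction n with
  | zero => simp
  | succ n ih =>
    have hIcc : Icc (-(n + 1 : ℕ) : ℤ) (n + 1 : ℕ) =
        insert (n + 1 : ℤ) (insert (-(n + 1 : ℤ)) (Icc (-n : ℤ) n)) := by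
      ext j; simp only [mem_insert, mem_Icc]; omega
    rw [hIcc, sum_insert (by simp only [mem_insert, mem_Icc]; omega),
      sum_insert (by simp only [mem_Icc]; omega), ih, sum_range_succ _ (n + 1),
      if_neg n.succ_ne_zero]
    push_cast
    abel

lemma sum_Icc_neg_comp {M : Type*} [AddCommMonoid M] (f : ℤ → M) (m : ℤ) :
    ∑ j ∈ Icc (-m) m, f (-j) = ∑ j ∈ Icc (-m) m, f j :=
  sum_nbij' Neg.neg Neg.neg (by simp; omega) (by simp; omega) (by simp) (by simp) (by simp)

lemma sum_Icc_one_sub_eq_zero {M : Type*} [AddCommMonoid M] {f : ℤ → M}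
    (hf : ∀ j, f j + f (1 - j) = 0) (m : ℤ) : ∑ j ∈ Icc (1 - m) m, f j = 0 :=
  sum_involution (fun j _ ↦ 1 - j) (fun j _ ↦ hf j) (fun j _ _ ↦ by omega)
    (fun j hj ↦ by simp only [mem_Icc] at hj ⊢; omega) (fun j _ ↦ by ring)

lemma zero_le_mul_three_mul_sub_one (j : ℤ) : 0 ≤ j * (3 * j - 1) := by
  rcases le_or_gt j 0 with h | h <;> nlinarith

def pentagonalWeight (j : ℤ) : ℚ⟦X⟧ := (j.negOnePow : ℤ) * qPow (j * (3 * j - 1))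

lemma pentagonalWeight_zero : pentagonalWeight 0 = 1 := by
  simp [pentagonalWeight, qPow]

lemma pentagonalWeight_mul_qPow (j : ℤ) {e : ℤ} (he : 0 ≤ e) :
    pentagonalWeight j * qPow e = (j.negOnePow : ℤ) * qPow (j * (3 * j - 1) + e) := by
  rw [pentagonalWeight, mul_assoc, qPow_add (zero_le_mul_three_mul_sub_one j) he]

lemma pentagonalWeight_one_sub_mul_qPow {j m : ℤ} (h₁ : 0 ≤ m - 2 * j)
    (h₂ : 0 ≤ m + 2 * j - 2) :
    pentagonalWeight (1 - j) * qPow (m + 2 * j - 2) =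
      -(pentagonalWeight j * qPow (m - 2 * j)) := by
  rw [pentagonalWeight_mul_qPow _ h₁, pentagonalWeight_mul_qPow _ h₂, Int.negOnePow_sub,
    Int.negOnePow_one]
  push_cast
  ring_nf

lemma pentagonalWeight_mul_qPow_add_two_mul {j : ℤ} (m : ℕ) (h : 0 ≤ m + 2 * j) :
    pentagonalWeight j * qPow (m + 2 * j) = X ^ m * pentagonalWeight (-j) := by
  rw [pentagonalWeight_mul_qPow _ h, pentagonalWeight, Int.negOnePow_neg, ← qPow_natCast,
    mul_left_comm, ← qPow_add (by positivity) (zero_le_mul_three_mul_sub_one _)]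
  ring_nf

lemma pentagonalWeight_neg {j : ℤ} (hj : 0 ≤ j) :
    pentagonalWeight (-j) = pentagonalWeight j * qPow (2 * j) := by
  have h := pentagonalWeight_mul_qPow_add_two_mul 0 (j := j) (by omega)
  simpa using h.symm

def pentagonalSum (n : ℕ) : ℚ⟦X⟧ :=
  ∑ j ∈ Icc (-n : ℤ) n, pentagonalWeight j * gaussBinomZ (n - 2 * j) (n + 2 * j)

def pentagonalSumOdd (n : ℕ) : ℚ⟦X⟧ :=
  ∑ j ∈ Icc (-n : ℤ) n, pentagonalWeight j * gaussBinomZ (n + 1 - 2 * j) (n + 2 * j)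

lemma pentagonalSumOdd_eq_pentagonalSum (n : ℕ) : pentagonalSumOdd n = pentagonalSum n := by
  set T : ℤ → ℚ⟦X⟧ := fun j ↦
    pentagonalWeight j * (qPow (n + 1 - 2 * j) * gaussBinomZ (n + 1 - 2 * j) (n + 2 * j - 1))
  have hpascal (j : ℤ) : pentagonalWeight j * gaussBinomZ (n + 1 - 2 * j) (n + 2 * j) =
      pentagonalWeight j * gaussBinomZ (n - 2 * j) (n + 2 * j) + T j := by
    have h := gaussBinomZ_succ_succ' (a := n - 2 * j) (b := n + 2 * j - 1) (by omega)
    rw [sub_add_cancel, show (n : ℤ) - 2 * j + 1 = n + 1 - 2 * j by ring] at h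
    rw [h, mul_add]
  -- `j ↦ 1 - j` swaps the two parts of the Gaussian binomial in `T` and negates the monomial
  have hT (j : ℤ) : T j + T (1 - j) = 0 := by
    simp only [T, show (n : ℤ) + 1 - 2 * (1 - j) = n + 2 * j - 1 by ring,
      show (n : ℤ) + 2 * (1 - j) - 1 = n + 1 - 2 * j by ring,
      gaussBinomZ_comm (n + 2 * j - 1)]
    by_cases hG : gaussBinomZ (n + 1 - 2 * j) (n + 2 * j - 1) = 0
    · simp [hG]
    obtain ⟨h₁, h₂⟩ := nonneg_of_gaussBinomZ_ne_zero hG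
    have := pentagonalWeight_one_sub_mul_qPow (j := j) (m := n + 1) (by omega) (by omega)
    rw [show (n : ℤ) + 1 + 2 * j - 2 = n + 2 * j - 1 by ring] at this
    linear_combination gaussBinomZ (n + 1 - 2 * j) (n + 2 * j - 1) * this
  have hTsum : ∑ j ∈ Icc (-n : ℤ) n, T j = 0 := by
    rw [← sum_Icc_one_sub_eq_zero hT (n + 1)]
    refine sum_subset (Icc_subset_Icc (by omega) (by omega)) fun j hj hj' ↦ ?_
    simp only [mem_Icc] at hj hj'
    simp [T, gaussBinomZ_of_neg_left (show (n : ℤ) + 1 - 2 * j < 0 by omega)]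
  rw [pentagonalSumOdd, pentagonalSum, sum_congr rfl fun j _ ↦ hpascal j, sum_add_distrib,
    hTsum, add_zero]

lemma pentagonalSum_succ (n : ℕ) :
    pentagonalSum (n + 1) = (1 + X ^ (n + 1)) * pentagonalSumOdd n := by
  set F : ℤ → ℚ⟦X⟧ := fun j ↦
    pentagonalWeight j * gaussBinomZ (n + 1 - 2 * j) (n + 2 * j)
  have hpascal (j : ℤ) :
      pentagonalWeight j * gaussBinomZ ((n + 1 : ℕ) - 2 * j) ((n + 1 : ℕ) + 2 * j) =
        F j + X ^ (n + 1) * F (-j) := by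
    have h := gaussBinomZ_succ_succ (a := n - 2 * j) (b := n + 2 * j) (by omega)
    rw [show (n : ℤ) - 2 * j + 1 = n + 1 - 2 * j by ring,
      show (n : ℤ) + 2 * j + 1 = n + 1 + 2 * j by ring] at h
    have hFneg : F (-j) = pentagonalWeight (-j) * gaussBinomZ (n - 2 * j) (n + 1 + 2 * j) := by
      simp only [F]
      rw [show (n : ℤ) + 1 - 2 * -j = n + 1 + 2 * j by ring,
        show (n : ℤ) + 2 * -j = n - 2 * j by ring, gaussBinomZ_comm]
    push_cast
    rw [h, hFneg, mul_add, ← mul_assoc]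
    by_cases hG : gaussBinomZ (n - 2 * j) (n + 1 + 2 * j) = 0
    · simp [F, hG]
    have := pentagonalWeight_mul_qPow_add_two_mul (n + 1) (j := j)
      (nonneg_of_gaussBinomZ_ne_zero hG).2
    push_cast at this
    rw [this]
    ring
  have hF : ∑ j ∈ Icc (-(n + 1 : ℕ) : ℤ) (n + 1 : ℕ), F j = pentagonalSumOdd n := by
    refine (sum_subset (Icc_subset_Icc (by omega) (by omega)) fun j hj hj' ↦ ?_).symm
    simp only [mem_Icc] at hj hj'
    rcases le_or_gt j 0 with h | h
    · simp [F, gaussBinomZ_of_neg_right _ (show (n : ℤ) + 2 * j < 0 by omega)]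
    · simp [F, gaussBinomZ_of_neg_left (show (n : ℤ) + 1 - 2 * j < 0 by omega)]
  rw [pentagonalSum, sum_congr rfl fun j _ ↦ hpascal j, sum_add_distrib, ← mul_sum,
    sum_Icc_neg_comp F, hF]
  ring

lemma pentagonalSum_eq_prod (n : ℕ) : pentagonalSum n = ∏ i ∈ range n, (1 + X ^ (i + 1)) := by
  induction n with
  | zero => simp [pentagonalSum, pentagonalWeight_zero, gaussBinomZ_zero_left]
  | succ n ih =>
    rw [pentagonalSum_succ, pentagonalSumOdd_eq_pentagonalSum, ih, prod_range_succ, mul_comm]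

def alphaC1 (k : ℕ) : ℚ⟦X⟧ :=
  if k = 0 then 1
  else if k % 2 = 1 then 0
  else (-1) ^ (k / 2) * X ^ (k / 2 * (3 * (k / 2) - 1)) * (1 + X ^ k)

lemma alphaC1_two_mul_add_one (j : ℕ) : alphaC1 (2 * j + 1) = 0 := by
  simp [alphaC1]

lemma alphaC1_two_mul (j : ℕ) :
    alphaC1 (2 * j) = if j = 0 then pentagonalWeight 0 else
      pentagonalWeight j + pentagonalWeight (-j) := by
  rcases eq_or_ne j 0 with rfl | hj
  · simp [alphaC1, pentagonalWeight_zero]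
  have hqPow : qPow (j * (3 * j - 1)) = X ^ (j * (3 * j - 1)) := by
    rw [← qPow_natCast]
    push_cast [Nat.cast_sub (show 1 ≤ 3 * j by omega)]
    rfl
  rw [if_neg hj, pentagonalWeight_neg (by omega), alphaC1, if_neg (by omega), if_neg (by omega),
    pentagonalWeight, Nat.mul_div_cancel_left j two_pos, Int.coe_negOnePow_natCast, hqPow,
    show qPow (2 * j) = X ^ (2 * j) by exact_mod_cast qPow_natCast (2 * j)]
  push_cast
  ring

lemma pentagonalSum_eq_sum_alphaC1 (n : ℕ) :
    pentagonalSum n = ∑ r ∈ range (n + 1), alphaC1 r * gaussBinomZ (n - r) (n + r) := by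
  set f : ℕ → ℚ⟦X⟧ := fun r ↦ alphaC1 r * gaussBinomZ (n - r) (n + r)
  have hf : ∑ r ∈ range (n + 1), f r = ∑ r ∈ range (2 * (n + 1)), f r :=
    sum_subset (range_subset_range.2 (by omega)) fun r hr hr' ↦ by
      simp only [mem_range] at hr hr'
      simp [f, gaussBinomZ_of_neg_left (show (n : ℤ) - r < 0 by omega)]
  rw [hf, sum_range_two_mul, pentagonalSum, sum_Icc_neg_natCast_eq_sum_range]
  refine sum_congr rfl fun j _ ↦ ?_
  simp only [f, alphaC1_two_mul, alphaC1_two_mul_add_one, zero_mul, add_zero]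
  split_ifs with hj
  · simp [hj]
  · push_cast
    rw [gaussBinomZ_comm (n - 2 * -(j : ℤ))]
    ring_nf

lemma alphaC1_mul_inv_pq (n : ℕ) {r : ℕ} (hr : r ≤ n) :
    alphaC1 r * (pq (n + r) * pq (n - r))⁻¹ =
      (pq (2 * n))⁻¹ * (alphaC1 r * gaussBinomZ (n - r) (n + r)) := by
  have h2n : 2 * n = (n - r) + (n + r) := by omega
  rw [show (n : ℤ) - r = (n - r : ℕ) by omega, ← Nat.cast_add, gaussBinomZ_natCast,
    mul_left_comm, h2n, inv_pq_mul_gaussBinom, PowerSeries.mul_inv_rev]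

/-- Slater's Bailey pair C(1): `α₀ = 1`, `α_{2n} = (−1)ⁿ q^{n(3n−1)}(1+q^{2n})`,
`α_{2n+1} = 0`, `β_n = 1/((q;q)_n (q;q²)_n)` is a Bailey pair relative to `a = 1`. -/
theorem bailey_pair_C1 :
    IsBaileyPair
      (fun k =>
        if k = 0 then 1
        else if k % 2 = 1 then 0
        else (-1 : PowerSeries ℚ) ^ (k / 2) *
          (PowerSeries.X : PowerSeries ℚ) ^ ((k / 2) * (3 * (k / 2) - 1)) *
          (1 + (PowerSeries.X : PowerSeries ℚ) ^ k))
      (fun n => (pq n * pq2 n)⁻¹) := by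
  intro n
  change (pq n * pq2 n)⁻¹ = ∑ r ∈ range (n + 1), alphaC1 r * (pq (n + r) * pq (n - r))⁻¹
  rw [sum_congr rfl fun r hr ↦ alphaC1_mul_inv_pq n (Nat.lt_succ_iff.1 (mem_range.1 hr)),
    ← mul_sum, ← pentagonalSum_eq_sum_alphaC1, pentagonalSum_eq_prod, inv_pq_mul_pq2]
end
end

section
/- The pair (α_n, β_n) with α_0 = 1, α_{2n} = (−1)^n q^{n(n−1)}(1+q^{2n}) for n ≥ 1, α_{2n+1} = 0, and β_n = q^{n(n−1)/2}/((q;q)_n (q;q²)_n) is a Bailey pair relative to a = 1; that is, β_n = ∑_{r=0}^{n} α_r / ((q;q)_{n+r} (q;q)_{n−r}) for all n ≥ 0. -/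
open Finset PowerSeries
open scoped Classical

noncomputable section

/-!
Multiplying the Bailey relation by `(q;q)_{2n} = (q;q)_n (q;q²)_n (-q;q)_n`, and splitting
`α_{2k}` into the weights `w(k) = (-1)^k q^{k²-k}` of `k` and `-k`, it becomes
`U(2n, n) = q^{n(n-1)/2} (-q;q)_n`, where `U(m, s) = ∑_{k ∈ ℤ} w(k) [m, s - 2k]_q`.
The `q`-Pascal rule and the symmetry `[m, j] = [m, m - j]` give
`U(m+1, s) = U(m, s) + q^{m+1-s} U(m, m+1-s)`, and the shift `k ↦ k + 1` gives
`U(m, s+2) = -U(m, m-s)`, so that `U(2n, n+1) = 0`. Hence `U(2n+1, n+1) = q^n U(2n, n)` and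
`U(2n+2, n+1) = (1 + q^{n+1}) U(2n+1, n+1)`, and the closed form follows by induction.
The computation takes place in Laurent series, where the `q`-Pochhammer symbols are invertible.
-/

section QAnalogues

variable {R S : Type*} [CommRing R] [CommRing S]

def qPochhammer (q : R) (k : ℕ) : R := ∏ j ∈ range k, (1 - q ^ (j + 1))

def oddQPochhammer (q : R) (k : ℕ) : R := ∏ j ∈ range k, (1 - q ^ (2 * j + 1))

def negQPochhammer (q : R) (k : ℕ) : R := ∏ j ∈ range k, (1 + q ^ (j + 1))

theorem qPochhammer_zero (q : R) : qPochhammer q 0 = 1 := prod_range_zero _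

theorem qPochhammer_succ (q : R) (k : ℕ) :
    qPochhammer q (k + 1) = qPochhammer q k * (1 - q ^ (k + 1)) := prod_range_succ _ _

theorem map_qPochhammer (f : R →+* S) (q : R) (k : ℕ) :
    f (qPochhammer q k) = qPochhammer (f q) k := by
  simp [qPochhammer, map_prod]

theorem map_oddQPochhammer (f : R →+* S) (q : R) (k : ℕ) :
    f (oddQPochhammer q k) = oddQPochhammer (f q) k := by
  simp [oddQPochhammer, map_prod]

theorem qPochhammer_two_mul (q : R) (n : ℕ) :
    qPochhammer q (2 * n) = qPochhammer q n * oddQPochhammer q n * negQPochhammer q n := by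
  induction n with
  | zero => simp [qPochhammer, oddQPochhammer, negQPochhammer]
  | succ n ih =>
    rw [show 2 * (n + 1) = 2 * n + 1 + 1 by ring, qPochhammer_succ, qPochhammer_succ, ih,
      qPochhammer_succ]
    simp only [oddQPochhammer, negQPochhammer, prod_range_succ]
    ring

end QAnalogues

section QBinomial

variable {K : Type*} [Field K]

/-- The Gaussian binomial coefficient `[m, j]_q`, extended by `0` to all `j ∉ [0, m]`. -/
def qBinom (q : K) (m : ℕ) (j : ℤ) : K :=
  if 0 ≤ j ∧ j ≤ m then
    qPochhammer q m / (qPochhammer q j.toNat * qPochhammer q (m - j.toNat))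
  else 0

variable {q : K}

theorem qBinom_natCast {m k : ℕ} (h : k ≤ m) :
    qBinom q m k = qPochhammer q m / (qPochhammer q k * qPochhammer q (m - k)) := by
  simp [qBinom, h]

theorem qBinom_of_neg (m : ℕ) {j : ℤ} (h : j < 0) : qBinom q m j = 0 :=
  if_neg (by omega)

theorem qBinom_of_lt {m : ℕ} {j : ℤ} (h : m < j) : qBinom q m j = 0 :=
  if_neg (by omega)

theorem mem_Icc_of_qBinom_ne_zero {m : ℕ} {j : ℤ} (h : qBinom q m j ≠ 0) :
    j ∈ Set.Icc 0 (m : ℤ) := by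
  by_contra hj
  exact h (if_neg hj)

theorem qBinom_symm (m : ℕ) (j : ℤ) : qBinom q m (m - j) = qBinom q m j := by
  by_cases hj : 0 ≤ j ∧ j ≤ m
  · obtain ⟨k, rfl⟩ := Int.eq_ofNat_of_zero_le hj.1
    have hk : k ≤ m := by omega
    rw [show (m : ℤ) - k = ((m - k : ℕ) : ℤ) by omega, qBinom_natCast (Nat.sub_le m k),
      qBinom_natCast hk, Nat.sub_sub_self hk, mul_comm]
  · rw [qBinom, if_neg (by omega), qBinom, if_neg hj]

theorem qBinom_zero_right (hq : ∀ k, qPochhammer q k ≠ 0) (m : ℕ) : qBinom q m 0 = 1 := by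
  rw [← Nat.cast_zero, qBinom_natCast (Nat.zero_le m)]
  simp [qPochhammer_zero, hq m]

theorem qBinom_self (hq : ∀ k, qPochhammer q k ≠ 0) (m : ℕ) : qBinom q m m = 1 := by
  rw [qBinom_natCast le_rfl]
  simp [qPochhammer_zero, hq m]

theorem inv_qPochhammer_mul_qPochhammer (hq : ∀ k, qPochhammer q k ≠ 0) {m k : ℕ}
    (h : k ≤ m) :
    (qPochhammer q k * qPochhammer q (m - k))⁻¹ = qBinom q m k / qPochhammer q m := by
  rw [qBinom_natCast h, div_div_cancel_left' (hq m)]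

theorem qBinom_succ (hq : ∀ k, qPochhammer q k ≠ 0) (m : ℕ) (j : ℤ) :
    qBinom q (m + 1) j = qBinom q m j + q ^ ((m : ℤ) + 1 - j) * qBinom q m (j - 1) := by
  rcases lt_or_ge j 0 with hj | hj
  · simp [qBinom_of_neg _ hj, qBinom_of_neg m (show j - 1 < 0 by omega)]
  obtain ⟨_ | k, rfl⟩ := Int.eq_ofNat_of_zero_le hj
  · rw [Nat.cast_zero, zero_sub, qBinom_zero_right hq, qBinom_zero_right hq,
      qBinom_of_neg m (by norm_num : (-1 : ℤ) < 0), mul_zero, add_zero]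
  rw [show ((k + 1 : ℕ) : ℤ) - 1 = k by push_cast; ring]
  rcases lt_trichotomy m k with hmk | rfl | hkm
  · rw [qBinom_of_lt (show ((m + 1 : ℕ) : ℤ) < (k + 1 : ℕ) by omega),
      qBinom_of_lt (show (m : ℤ) < (k + 1 : ℕ) by omega),
      qBinom_of_lt (show (m : ℤ) < k by omega), mul_zero, add_zero]
  · rw [qBinom_self hq, qBinom_of_lt (show (m : ℤ) < (m + 1 : ℕ) by omega), qBinom_self hq,
      show (m : ℤ) + 1 - (m + 1 : ℕ) = 0 by push_cast; ring]
    simp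
  obtain ⟨a, rfl⟩ := Nat.exists_eq_add_of_lt hkm
  rw [show ((k + a + 1 : ℕ) : ℤ) + 1 - (k + 1 : ℕ) = (a + 1 : ℕ) by push_cast; ring,
    zpow_natCast,
    qBinom_natCast (by omega), qBinom_natCast (by omega), qBinom_natCast (by omega),
    show k + a + 1 + 1 - (k + 1) = a + 1 by omega, show k + a + 1 - (k + 1) = a by omega,
    show k + a + 1 - k = a + 1 by omega]
  field_simp [hq k, hq a, hq (k + 1), hq (a + 1), hq (k + a + 1)]
  rw [qPochhammer_succ q (k + a + 1), qPochhammer_succ q k, qPochhammer_succ q a]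
  ring

end QBinomial

namespace SlaterC5

def alpha {R : Type*} [CommRing R] (q : R) (k : ℕ) : R :=
  if k = 0 then 1
  else if k % 2 = 1 then 0
  else (-1) ^ (k / 2) * q ^ ((k / 2) * (k / 2 - 1)) * (1 + q ^ k)

theorem map_alpha {R S : Type*} [CommRing R] [CommRing S] (f : R →+* S) (q : R) (k : ℕ) :
    f (alpha q k) = alpha (f q) k := by
  unfold alpha
  split_ifs <;> simp

variable {K : Type*} [Field K]

def weight (q : K) (k : ℤ) : K := (-1) ^ k * q ^ (k ^ 2 - k)

def weightedBinomSum (q : K) (m : ℕ) (s : ℤ) : K :=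
  ∑ᶠ k : ℤ, weight q k * qBinom q m (s - 2 * k)

variable {q : K}

theorem weight_zero : weight q 0 = 1 := by simp [weight]

theorem weight_neg (hq0 : q ≠ 0) (k : ℤ) : weight q (-k) = q ^ (2 * k) * weight q k := by
  rw [weight, weight, ← inv_zpow', inv_neg_one, mul_left_comm, ← zpow_add₀ hq0]
  ring_nf

theorem weight_add_one (k : ℤ) : weight q (k + 1) = -weight q (-k) := by
  rw [weight, weight, zpow_add_one₀ (by norm_num), ← inv_zpow', inv_neg_one]
  ring_nf

theorem hasFiniteSupport_qBinom (m : ℕ) (s : ℤ) :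
    Function.HasFiniteSupport fun k : ℤ => qBinom q m (s - 2 * k) := by
  refine (Set.finite_Icc ((s - m) / 2) (s / 2)).subset fun k hk => ?_
  obtain ⟨h0, hm⟩ := mem_Icc_of_qBinom_ne_zero hk
  simp only [Set.mem_Icc]
  omega

theorem finsum_weight_neg_mul (m : ℕ) (s : ℤ) :
    ∑ᶠ k, weight q (-k) * qBinom q m (s - 2 * k) = weightedBinomSum q m (m - s) := by
  rw [weightedBinomSum, ← finsum_comp_equiv (Equiv.neg ℤ)]
  refine finsum_congr fun k => ?_
  rw [Equiv.neg_apply, neg_neg, ← qBinom_symm]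
  ring_nf

theorem weightedBinomSum_succ (hq0 : q ≠ 0) (hq : ∀ k, qPochhammer q k ≠ 0) (m : ℕ)
    (s : ℤ) :
    weightedBinomSum q (m + 1) s =
      weightedBinomSum q m s + q ^ ((m : ℤ) + 1 - s) * weightedBinomSum q m (m + 1 - s) := by
  have hsplit : ∀ k, weight q k * qBinom q (m + 1) (s - 2 * k) =
      weight q k * qBinom q m (s - 2 * k) +
        q ^ ((m : ℤ) + 1 - s) * (weight q (-k) * qBinom q m (s - 1 - 2 * k)) := by
    intro k
    rw [qBinom_succ hq, weight_neg hq0,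
      show (m : ℤ) + 1 - (s - 2 * k) = m + 1 - s + 2 * k by ring, zpow_add₀ hq0,
      show s - 2 * k - 1 = s - 1 - 2 * k by ring]
    ring
  rw [weightedBinomSum, finsum_congr hsplit,
    finsum_add_distrib ((hasFiniteSupport_qBinom m s).fun_mul_right _)
      (((hasFiniteSupport_qBinom m (s - 1)).fun_mul_right _).fun_mul_right _),
    ← mul_finsum, finsum_weight_neg_mul, ← weightedBinomSum, sub_sub_eq_add_sub]

theorem weightedBinomSum_add_two (m : ℕ) (s : ℤ) :
    weightedBinomSum q m (s + 2) = -weightedBinomSum q m (m - s) := by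
  rw [← finsum_weight_neg_mul, ← finsum_neg_distrib, weightedBinomSum,
    ← finsum_comp_equiv (Equiv.addRight 1)]
  refine finsum_congr fun k => ?_
  rw [Equiv.coe_addRight, weight_add_one]
  ring_nf

theorem weightedBinomSum_zero_zero : weightedBinomSum q 0 0 = 1 := by
  rw [weightedBinomSum, finsum_eq_single _ 0 fun k hk => ?_]
  · simp [weight_zero, qBinom, qPochhammer_zero]
  rcases lt_or_gt_of_ne hk with hk | hk
  · rw [qBinom_of_lt (by omega), mul_zero]
  · rw [qBinom_of_neg _ (by omega), mul_zero]

theorem weightedBinomSum_center_succ_eq_zero [CharZero K] (n : ℕ) :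
    weightedBinomSum q (2 * n) (n + 1) = 0 := by
  have h := weightedBinomSum_add_two (q := q) (2 * n) (n - 1)
  rw [show (n : ℤ) - 1 + 2 = n + 1 by ring,
    show ((2 * n : ℕ) : ℤ) - (n - 1) = n + 1 by push_cast; ring] at h
  exact self_eq_neg.mp h

theorem weightedBinomSum_odd_center (hq0 : q ≠ 0) (hq : ∀ k, qPochhammer q k ≠ 0)
    [CharZero K] (n : ℕ) :
    weightedBinomSum q (2 * n + 1) (n + 1) = q ^ n * weightedBinomSum q (2 * n) n := by
  rw [weightedBinomSum_succ hq0 hq, weightedBinomSum_center_succ_eq_zero, zero_add,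
    show ((2 * n : ℕ) : ℤ) + 1 - (n + 1) = n by push_cast; ring, zpow_natCast]

theorem weightedBinomSum_succ_center (hq0 : q ≠ 0) (hq : ∀ k, qPochhammer q k ≠ 0)
    (n : ℕ) :
    weightedBinomSum q (2 * (n + 1)) (n + 1 : ℕ) =
      (1 + q ^ (n + 1)) * weightedBinomSum q (2 * n + 1) (n + 1) := by
  rw [show 2 * (n + 1) = 2 * n + 1 + 1 by ring, weightedBinomSum_succ hq0 hq,
    show ((2 * n + 1 : ℕ) : ℤ) + 1 - (n + 1 : ℕ) = (n + 1 : ℕ) by push_cast; ring,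
    zpow_natCast]
  push_cast
  ring

theorem weightedBinomSum_center (hq0 : q ≠ 0) (hq : ∀ k, qPochhammer q k ≠ 0) [CharZero K]
    (n : ℕ) : weightedBinomSum q (2 * n) n = ∏ j ∈ range n, q ^ j * (1 + q ^ (j + 1)) := by
  induction n with
  | zero => simpa using weightedBinomSum_zero_zero
  | succ n ih =>
    rw [weightedBinomSum_succ_center hq0 hq, weightedBinomSum_odd_center hq0 hq, ih,
      prod_range_succ]
    ring

theorem alpha_two_mul {j : ℕ} (hj : j ≠ 0) : alpha q (2 * j) = weight q j + weight q (-j) := by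
  have hj1 : 1 ≤ j := Nat.one_le_iff_ne_zero.mpr hj
  have e1 : (j : ℤ) ^ 2 - j = (j * (j - 1) : ℕ) := by push_cast [Nat.cast_sub hj1]; ring
  have e2 : (-(j : ℤ)) ^ 2 - -j = (j * (j - 1) + 2 * j : ℕ) := by
    push_cast [Nat.cast_sub hj1]; ring
  rw [alpha, if_neg (by omega), if_neg (by omega), Nat.mul_div_cancel_left j two_pos, weight,
    weight, e1, e2, ← inv_zpow', inv_neg_one]
  simp only [zpow_natCast, pow_add]
  ring

theorem alpha_mul_qBinom_eq_sum_fiber {n r : ℕ} (hr : r ≤ n) :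
    alpha q r * qBinom q (2 * n) (n - r) =
      ∑ k ∈ Icc (-(n : ℤ)) n with 2 * k.natAbs = r,
        weight q k * qBinom q (2 * n) (n - 2 * k) := by
  obtain ⟨j, rfl | rfl⟩ := Nat.even_or_odd' r
  · rcases eq_or_ne j 0 with rfl | hj
    · rw [show {k ∈ Icc (-(n : ℤ)) n | 2 * k.natAbs = 2 * 0} = {0} by ext; simp; omega]
      simp [alpha, weight_zero]
    rw [show {k ∈ Icc (-(n : ℤ)) n | 2 * k.natAbs = 2 * j} = {(j : ℤ), -(j : ℤ)} by
        ext; simp; omega,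
      sum_pair (by omega), alpha_two_mul hj, ← qBinom_symm (2 * n) (n - 2 * -(j : ℤ))]
    push_cast
    ring_nf
  · rw [alpha, if_neg (by omega), if_pos (by omega), zero_mul]
    refine (sum_eq_zero fun k hk => ?_).symm
    simp only [mem_filter] at hk
    omega

theorem sum_alpha_mul_qBinom (n : ℕ) :
    ∑ r ∈ range (n + 1), alpha q r * qBinom q (2 * n) (n - r) =
      weightedBinomSum q (2 * n) n := by
  have hsupp : Function.support (fun k : ℤ => weight q k * qBinom q (2 * n) (n - 2 * k)) ⊆
      Icc (-(n : ℤ)) n := fun k hk => by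
    obtain ⟨h0, hm⟩ := mem_Icc_of_qBinom_ne_zero (right_ne_zero_of_mul hk)
    simp only [coe_Icc, Set.mem_Icc]
    omega
  rw [weightedBinomSum, finsum_eq_sum_of_support_subset _ hsupp,
    ← sum_filter_of_ne (p := fun k : ℤ => 2 * k.natAbs ∈ range (n + 1)) fun k hk hne => ?_,
    ← sum_fiberwise_eq_sum_filter]
  · exact sum_congr rfl fun r hr =>
      alpha_mul_qBinom_eq_sum_fiber (Nat.lt_succ_iff.mp (mem_range.mp hr))
  · obtain ⟨h0, hm⟩ := mem_Icc_of_qBinom_ne_zero (right_ne_zero_of_mul hne)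
    simp only [mem_range]
    omega

theorem sum_alpha_mul_inv_qPochhammer (hq0 : q ≠ 0) (hq : ∀ k, qPochhammer q k ≠ 0)
    [CharZero K] (n : ℕ) :
    ∑ r ∈ range (n + 1), alpha q r * (qPochhammer q (n + r) * qPochhammer q (n - r))⁻¹ =
      q ^ (n * (n - 1) / 2) * (qPochhammer q n * oddQPochhammer q n)⁻¹ := by
  have hterm : ∀ r ∈ range (n + 1), (qPochhammer q (n + r) * qPochhammer q (n - r))⁻¹ =
      qBinom q (2 * n) (n - r) / qPochhammer q (2 * n) := fun r hr => by
    have hr : r ≤ n := Nat.lt_succ_iff.mp (mem_range.mp hr)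
    rw [mul_comm, show n + r = 2 * n - (n - r) by omega,
      inv_qPochhammer_mul_qPochhammer hq (by omega), Nat.cast_sub hr]
  have hneg : negQPochhammer q n ≠ 0 :=
    right_ne_zero_of_mul (qPochhammer_two_mul q n ▸ hq (2 * n))
  have hqn := hq n
  calc _ = (∑ r ∈ range (n + 1), alpha q r * qBinom q (2 * n) (n - r)) /
        qPochhammer q (2 * n) := by
        rw [sum_div]
        exact sum_congr rfl fun r hr => by rw [hterm r hr, mul_div_assoc]
    _ = (∏ j ∈ range n, q ^ j * (1 + q ^ (j + 1))) / qPochhammer q (2 * n) := by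
        rw [sum_alpha_mul_qBinom, weightedBinomSum_center hq0 hq]
    _ = _ := by
        rw [prod_mul_distrib, prod_pow_eq_pow_sum, sum_range_id, ← negQPochhammer,
          qPochhammer_two_mul]
        field_simp

end SlaterC5

section PowerSeries

variable {F L : Type*} [Field F] [DivisionRing L]

theorem map_inv_of_constantCoeff_ne_zero (f : F⟦X⟧ →+* L) {u : F⟦X⟧}
    (hu : constantCoeff u ≠ 0) : f u⁻¹ = (f u)⁻¹ :=
  eq_inv_of_mul_eq_one_right (by rw [← map_mul, PowerSeries.mul_inv_cancel u hu, map_one])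

theorem constantCoeff_qPochhammer_X (n : ℕ) :
    constantCoeff (qPochhammer (X : F⟦X⟧) n) = 1 := by
  simp [qPochhammer]

theorem constantCoeff_oddQPochhammer_X (n : ℕ) :
    constantCoeff (oddQPochhammer (X : F⟦X⟧) n) = 1 := by
  simp [oddQPochhammer]

end PowerSeries

/-- Slater's Bailey pair C(5): `α₀ = 1`, `α_{2n} = (−1)ⁿ q^{n(n−1)}(1+q^{2n})`,
`α_{2n+1} = 0`, `β_n = q^{n(n−1)/2}/((q;q)_n (q;q²)_n)` is a Bailey pair
relative to `a = 1`. -/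
theorem bailey_pair_C5 :
    IsBaileyPair
      (fun k =>
        if k = 0 then 1
        else if k % 2 = 1 then 0
        else (-1 : PowerSeries ℚ) ^ (k / 2) *
          (PowerSeries.X : PowerSeries ℚ) ^ ((k / 2) * (k / 2 - 1)) *
          (1 + (PowerSeries.X : PowerSeries ℚ) ^ k))
      (fun n => (PowerSeries.X : PowerSeries ℚ) ^ (n * (n - 1) / 2) *
        (pq n * pq2 n)⁻¹) := by
  show ∀ n, X ^ (n * (n - 1) / 2) * (qPochhammer X n * oddQPochhammer X n)⁻¹ =
    ∑ r ∈ range (n + 1),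
      SlaterC5.alpha X r * (qPochhammer X (n + r) * qPochhammer X (n - r))⁻¹
  intro n
  let φ : ℚ⟦X⟧ →+* LaurentSeries ℚ := HahnSeries.ofPowerSeries ℤ ℚ
  have hφ : Function.Injective φ := HahnSeries.ofPowerSeries_injective
  have := charZero_of_injective_algebraMap (algebraMap ℚ (LaurentSeries ℚ)).injective
  have hq : ∀ k, qPochhammer (φ X) k ≠ 0 := fun k => by
    rw [← map_qPochhammer, map_ne_zero_iff φ hφ]
    exact ne_zero_of_map (f := constantCoeff) (by simp [constantCoeff_qPochhammer_X])
  apply hφ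
  rw [map_mul, map_pow, map_inv_of_constantCoeff_ne_zero _ (by simp [constantCoeff_qPochhammer_X,
    constantCoeff_oddQPochhammer_X]), map_mul, map_qPochhammer, map_oddQPochhammer, map_sum,
    ← SlaterC5.sum_alpha_mul_inv_qPochhammer ((map_ne_zero_iff φ hφ).mpr X_ne_zero) hq]
  refine sum_congr rfl fun r _ => ?_
  rw [map_mul, SlaterC5.map_alpha, map_inv_of_constantCoeff_ne_zero _ (by
    simp [constantCoeff_qPochhammer_X]), map_mul, map_qPochhammer, map_qPochhammer]
end
end
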